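/- For every n ≥ 3, the number of Catalan words of length n avoiding the pattern pair (≠, ≤) is exactly 3; the only such words are 0ⁿ, 0^{n−1}1, and 0^{n−2}10. -/
import Mathlib

/-- A Catalan word: first letter is 0 and each letter is at most the previous plus one. -/
def IsCatalanWord (w : List ℕ) : Prop :=
  (0 < w.length → w.getD 0 0 = 0) ∧
  ∀ i, i + 1 < w.length → w.getD (i + 1) 0 ≤ w.getD i 0 + 1

/-- `w` avoids the consecutive pattern pair `(X, Y)`. -/
def AvoidsPair (X Y : ℕ → ℕ → Prop) (w : List ℕ) : Prop :=
  ∀ i, i + 2 < w.length →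
    ¬ (X (w.getD i 0) (w.getD (i + 1) 0) ∧ Y (w.getD (i + 1) 0) (w.getD (i + 2) 0))

/-- Number of descents of `w`. -/
def descents (w : List ℕ) : ℕ :=
  ((Finset.range (w.length - 1)).filter (fun i => w.getD (i + 1) 0 < w.getD i 0)).card

/-- Catalan words of length `n` avoiding `(X,Y)`. -/
def CW (n : ℕ) (X Y : ℕ → ℕ → Prop) : Set (List ℕ) :=
  {w | w.length = n ∧ IsCatalanWord w ∧ AvoidsPair X Y w}

lemma ext_getD' {w v : List ℕ} (h : w.length = v.length)
    (h2 : ∀ i < w.length, w.getD i 0 = v.getD i 0) : w = v := by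
  apply List.ext_getElem h
  intro i h1 h1'
  have := h2 i h1
  rwa [List.getD_eq_getElem _ _ h1, List.getD_eq_getElem _ _ h1'] at this

lemma getD_rep (n i : ℕ) : (List.replicate n 0).getD i 0 = 0 := by
  rcases lt_or_ge i n with h | h
  · rw [List.getD_eq_getElem _ _ (by simpa using h), List.getElem_replicate]
  · rw [List.getD_eq_default]; simpa using h

lemma getD_w2 (n i : ℕ) : (List.replicate (n-1) 0 ++ [1]).getD i 0 = if i = n - 1 then 1 else 0 := by
  rcases lt_trichotomy i (n-1) with h | h | h
  · rw [List.getD_append _ _ _ _ (by simpa using h)]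
    simp [getD_rep, Nat.ne_of_lt h]
  · subst h
    simp [List.getD_append_right, le_refl]
  · rw [List.getD_eq_default]
    · simp [Nat.ne_of_gt h]
    · simp; omega

lemma getD_w3 (n i : ℕ) : (List.replicate (n-2) 0 ++ [1,0]).getD i 0 = if i = n - 2 then 1 else 0 := by
  rcases lt_trichotomy i (n-2) with h | h | h
  · rw [List.getD_append _ _ _ _ (by simpa using h)]
    simp [getD_rep, Nat.ne_of_lt h]
  · subst h
    rw [List.getD_append_right _ _ _ _ (by simp)]
    simp
  · rw [List.getD_append_right _ _ _ _ (by simp; omega)]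
    simp only [List.length_replicate]
    have hk : 1 ≤ i - (n-2) := by omega
    rcases Nat.exists_eq_add_of_le hk with ⟨k, hk'⟩
    rw [hk']
    rcases k with _ | k
    · simp [Nat.ne_of_gt h, List.getD]
    · rw [show 1 + (k+1) = k + 2 from by omega, if_neg (Nat.ne_of_gt h)]
      rfl

theorem stmt_3 (n : ℕ) (hn : 3 ≤ n) :
    CW n (· ≠ ·) (· ≤ ·) =
      {List.replicate n 0, List.replicate (n - 1) 0 ++ [1],
       List.replicate (n - 2) 0 ++ [1, 0]} ∧
    (CW n (· ≠ ·) (· ≤ ·)).ncard = 3 := by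
  have len1 : (List.replicate n 0).length = n := by simp
  have len2 : (List.replicate (n-1) 0 ++ [1]).length = n := by simp; omega
  have len3 : (List.replicate (n-2) 0 ++ [1,0]).length = n := by simp; omega
  have key : CW n (· ≠ ·) (· ≤ ·) =
      {List.replicate n 0, List.replicate (n - 1) 0 ++ [1],
       List.replicate (n - 2) 0 ++ [1, 0]} := by
    ext w
    simp only [CW, Set.mem_setOf_eq, Set.mem_insert_iff, Set.mem_singleton_iff]
    constructor
    · rintro ⟨hlen, ⟨h0, hcat⟩, hav⟩
      have hf0 : w.getD 0 0 = 0 := h0 (by omega)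
      have hcat' : ∀ i, i + 1 < n → w.getD (i+1) 0 ≤ w.getD i 0 + 1 :=
        fun i h => hcat i (by omega)
      have hdec : ∀ i, i + 2 < n → w.getD i 0 ≠ w.getD (i+1) 0 →
          w.getD (i+2) 0 < w.getD (i+1) 0 := by
        intro i h hne
        by_contra hle
        exact hav i (by omega) ⟨hne, by omega⟩
      by_cases hc : ∃ i, i + 1 < n ∧ w.getD i 0 ≠ w.getD (i+1) 0
      · obtain ⟨i, hi1, hine, hmin⟩ :
            ∃ i, i + 1 < n ∧ w.getD i 0 ≠ w.getD (i+1) 0 ∧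
              ∀ j < i, w.getD j 0 = w.getD (j+1) 0 := by
          classical
          refine ⟨Nat.find hc, (Nat.find_spec hc).1, (Nat.find_spec hc).2, ?_⟩
          intro j hj
          have hm := Nat.find_min hc hj
          have h1 := (Nat.find_spec hc).1
          by_contra hne'
          exact hm ⟨by omega, hne'⟩
        have hpre : ∀ j ≤ i, w.getD j 0 = 0 := by
          intro j hj
          induction j with
          | zero => exact hf0
          | succ k ih =>
            rw [← hmin k (by omega)]
            exact ih (by omega)
        have hfi : w.getD i 0 = 0 := hpre i le_rfl
        have hfi1 : w.getD (i+1) 0 = 1 := by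
          have := hcat' i hi1
          omega
        by_cases h2 : i + 2 < n
        · have hfi2 : w.getD (i+2) 0 = 0 := by
            have := hdec i h2 hine
            omega
          have h3 : ¬ (i + 3 < n) := by
            intro h3
            have e1 : w.getD (i+1+1) 0 = 0 := hfi2
            have e2 := hdec (i+1) (by omega) (by rw [hfi1, e1]; omega)
            omega
          right; right
          apply ext_getD' (by omega)
          intro j hj
          rw [getD_w3]
          rcases eq_or_ne j (n-2) with rfl | hne
          · rw [if_pos rfl, show n - 2 = i + 1 from by omega]
            exact hfi1
          · rw [if_neg hne]
            rcases lt_or_ge j (n-2) with hlt | hge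
            · exact hpre j (by omega)
            · rw [show j = i + 2 from by omega]
              exact hfi2
        · right; left
          apply ext_getD' (by omega)
          intro j hj
          rw [getD_w2]
          rcases eq_or_ne j (n-1) with rfl | hne
          · rw [if_pos rfl, show n - 1 = i + 1 from by omega]
            exact hfi1
          · rw [if_neg hne]
            exact hpre j (by omega)
      · push_neg at hc
        left
        apply ext_getD' (by omega)
        intro j hj
        rw [getD_rep]
        induction j with
        | zero => exact hf0
        | succ k ih =>
          rw [← hc k (by omega)]
          exact ih (by omega)
    · rintro (rfl | rfl | rfl)
      · refine ⟨len1, ⟨fun _ => getD_rep n 0, fun i _ => by simp [getD_rep]⟩, ?_⟩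
        intro i _ ⟨hne, _⟩
        simp [getD_rep] at hne
      · refine ⟨len2, ⟨fun _ => by rw [getD_w2]; split_ifs <;> omega,
          fun i h => by rw [getD_w2, getD_w2]; split_ifs <;> omega⟩, ?_⟩
        intro i h ⟨hne, hle⟩
        rw [len2] at h
        simp only [getD_w2] at hne hle
        split_ifs at hne hle <;> omega
      · refine ⟨len3, ⟨fun _ => by rw [getD_w3]; split_ifs <;> omega,
          fun i h => by rw [getD_w3, getD_w3]; split_ifs <;> omega⟩, ?_⟩
        intro i h ⟨hne, hle⟩
        rw [len3] at h
        simp only [getD_w3] at hne hle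
        split_ifs at hne hle <;> omega
  refine ⟨key, ?_⟩
  rw [key, Set.ncard_eq_three]
  refine ⟨_, _, _, ?_, ?_, ?_, rfl⟩
  · intro h
    have := congrArg (fun l => l.getD (n-1) 0) h
    simp only [getD_rep, getD_w2] at this
    split_ifs at this <;> omega
  · intro h
    have := congrArg (fun l => l.getD (n-2) 0) h
    simp only [getD_rep, getD_w3] at this
    split_ifs at this <;> omega
  · intro h
    have := congrArg (fun l => l.getD (n-2) 0) h
    simp only [getD_w2, getD_w3] at this
    split_ifs at this <;> omega
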